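/- arXiv:1902.08149 — 2 statements merged into one kernel-verified Lean document; each statement's English description precedes it below -/
import Mathlib

section
/- Let A be a weighted automaton that is unambiguous from p to q, and for each transition δ = (r,a,s) let φ_δ(x) be the formula asserting that the prefix before position x labels a run from p to r, position x carries letter a, and the suffix after x labels a run from s to q. Then for every word u and position i (1 ≤ i ≤ |u|): u with x ↦ i satisfies φ_δ if and only if u labels some run from p to q and δ is the i-th transition of the unique such run. -/
variable {Q Q' A R : Type*}

/-- `RunFrom Δ p w ρ`: `ρ` is the list of states visited after `p` along a run
reading `w` that starts in `p`. -/
def RunFrom (Δ : Q → A → Q → Prop) : Q → List A → List Q → Prop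
  | _, [], [] => True
  | p, a :: w, q :: ρ => Δ p a q ∧ RunFrom Δ q w ρ
  | _, _, _ => False

/-- There is a run from `p` to `q` reading `w`. -/
def HasRun (Δ : Q → A → Q → Prop) (p : Q) (w : List A) (q : Q) : Prop :=
  ∃ ρ, RunFrom Δ p w ρ ∧ (p :: ρ).getLast (List.cons_ne_nil _ _) = q

/-- `m`-fold power of a word. -/
def wpow (u : List A) (m : ℕ) : List A := (List.replicate m u).flatten

/-- Aperiodicity of a nondeterministic automaton. -/
def Aperiodic (Δ : Q → A → Q → Prop) : Prop :=
  ∃ m, 1 ≤ m ∧ ∀ (p q : Q) (u : List A), u ≠ [] →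
    (HasRun Δ p (wpow u m) q ↔ HasRun Δ p (wpow u (m + 1)) q)

/-- `p` and `q` are in the same strongly connected component. -/
def SameSCC (Δ : Q → A → Q → Prop) (p q : Q) : Prop :=
  p = q ∨ ((∃ u : List A, u ≠ [] ∧ HasRun Δ p u q) ∧ (∃ v : List A, v ≠ [] ∧ HasRun Δ q v p))

/-- The automaton is unambiguous from `p` to `q`. -/
def UnambFromTo (Δ : Q → A → Q → Prop) (p q : Q) : Prop :=
  ∀ (u : List A) (ρ₁ ρ₂ : List Q), u ≠ [] →
    RunFrom Δ p u ρ₁ → RunFrom Δ p u ρ₂ →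
    (p :: ρ₁).getLast (List.cons_ne_nil _ _) = q →
    (p :: ρ₂).getLast (List.cons_ne_nil _ _) = q → ρ₁ = ρ₂

def SCCUnambiguous (Δ : Q → A → Q → Prop) : Prop :=
  ∀ p q : Q, SameSCC Δ p q → UnambFromTo Δ p q

/-- The set of accepting runs on `w`, represented as pairs of an initial state and
the list of subsequently visited states. -/
def AccRuns (Δ : Q → A → Q → Prop) (I F : Set Q) (w : List A) : Set (Q × List Q) :=
  {x | x.1 ∈ I ∧ RunFrom Δ x.1 w x.2 ∧ (x.1 :: x.2).getLast (List.cons_ne_nil _ _) ∈ F}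

/-- The sequence of weights along a run. -/
def wgtSeq (wgt : Q → A → Q → R) : Q → List A → List Q → List R
  | p, a :: w, q :: ρ => wgt p a q :: wgtSeq wgt q w ρ
  | _, _, _ => []

/-! Runs on `u ++ a :: v` are exactly concatenations of a run on `u`, one transition reading `a`,
and a run on `v`; the positions `|u|` and `|u| + 1` of such a run are the endpoints of that
transition. -/

namespace RunFrom

variable {Δ : Q → A → Q → Prop}

theorem length_eq : ∀ {p : Q} {u : List A} {ρ : List Q}, RunFrom Δ p u ρ → ρ.length = u.length
  | _, [], [], _ => rfl
  | _, _ :: _, _ :: _, h => congrArg (· + 1) (length_eq h.2)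
  | _, [], _ :: _, h => h.elim
  | _, _ :: _, [], h => h.elim

theorem nil_iff {p : Q} {ρ : List Q} : RunFrom Δ p ([] : List A) ρ ↔ ρ = [] := by
  cases ρ <;> simp [RunFrom]

theorem cons_iff {p : Q} {a : A} {v : List A} {ρ : List Q} :
    RunFrom Δ p (a :: v) ρ ↔ ∃ s ρ', ρ = s :: ρ' ∧ Δ p a s ∧ RunFrom Δ s v ρ' := by
  cases ρ with
  | nil => simp [RunFrom]
  | cons s ρ' => simp [RunFrom]

theorem append_iff :
    ∀ {p : Q} {u v : List A} {ρ : List Q}, RunFrom Δ p (u ++ v) ρ ↔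
      ∃ ρ₁ ρ₂, ρ = ρ₁ ++ ρ₂ ∧ RunFrom Δ p u ρ₁ ∧
        RunFrom Δ ((p :: ρ₁).getLast (List.cons_ne_nil _ _)) v ρ₂
  | p, [], v, ρ => by simp [nil_iff]
  | p, a :: u, v, ρ => by
    simp only [List.cons_append, cons_iff, append_iff]
    constructor
    · rintro ⟨s, _, rfl, hδ, ρ₁, ρ₂, rfl, h₁, h₂⟩
      exact ⟨s :: ρ₁, ρ₂, rfl, ⟨s, ρ₁, rfl, hδ, h₁⟩, by simpa [List.getLast_cons] using h₂⟩
    · rintro ⟨_, ρ₂, rfl, ⟨s, ρ₁, rfl, hδ, h₁⟩, h₂⟩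
      exact ⟨s, ρ₁ ++ ρ₂, rfl, hδ, ρ₁, ρ₂, rfl, h₁, by simpa [List.getLast_cons] using h₂⟩

end RunFrom

theorem getElem?_cons_append_cons_length (p s : Q) (ρ₁ ρ₂ : List Q) :
    (p :: (ρ₁ ++ s :: ρ₂))[ρ₁.length]? = some ((p :: ρ₁).getLast (List.cons_ne_nil _ _)) := by
  rw [← List.cons_append, List.getElem?_append_left (by simp), List.getLast_eq_getElem]
  simp

theorem getElem?_cons_append_cons_length_succ (p s : Q) (ρ₁ ρ₂ : List Q) :
    (p :: (ρ₁ ++ s :: ρ₂))[ρ₁.length + 1]? = some s := by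
  simp

theorem getLast_cons_append_cons (p s : Q) (ρ₁ ρ₂ : List Q) :
    (p :: (ρ₁ ++ s :: ρ₂)).getLast (List.cons_ne_nil _ _) =
      (s :: ρ₂).getLast (List.cons_ne_nil _ _) :=
  List.getLast_append_of_right_ne_nil (p :: ρ₁) _ (List.cons_ne_nil _ _)

theorem exists_run_through_iff (Δ : Q → A → Q → Prop) (p q r s : Q) (a : A) (u v : List A) :
    (∃ ρ : List Q, RunFrom Δ p (u ++ a :: v) ρ ∧
        (p :: ρ).getLast (List.cons_ne_nil _ _) = q ∧
        (p :: ρ)[u.length]? = some r ∧ (p :: ρ)[u.length + 1]? = some s) ↔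
      HasRun Δ p u r ∧ Δ r a s ∧ HasRun Δ s v q := by
  simp only [RunFrom.append_iff, RunFrom.cons_iff]
  constructor
  · rintro ⟨_, ⟨ρ₁, _, rfl, h₁, s', ρ₂, rfl, hδ, h₂⟩, hq, hr, hs⟩
    rw [← h₁.length_eq, getElem?_cons_append_cons_length, Option.some_inj] at hr
    rw [← h₁.length_eq, getElem?_cons_append_cons_length_succ, Option.some_inj] at hs
    subst hr hs
    exact ⟨⟨ρ₁, h₁, rfl⟩, hδ, ρ₂, h₂, by rwa [getLast_cons_append_cons] at hq⟩
  · rintro ⟨⟨ρ₁, h₁, rfl⟩, hδ, ρ₂, h₂, rfl⟩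
    refine ⟨ρ₁ ++ s :: ρ₂, ⟨ρ₁, s :: ρ₂, rfl, h₁, s, ρ₂, rfl, hδ, h₂⟩,
      getLast_cons_append_cons .., ?_, ?_⟩ <;> rw [← h₁.length_eq]
    · exact getElem?_cons_append_cons_length ..
    · exact getElem?_cons_append_cons_length_succ ..

theorem phi_delta_characterization_general (Δ : Q → A → Q → Prop)
    (p q r s : Q) (a : A) (hδ : Δ r a s)
    (u : List A) (i : ℕ) (hi1 : 1 ≤ i) :
    (HasRun Δ p (u.take (i - 1)) r ∧ u[i - 1]? = some a ∧ HasRun Δ s (u.drop i) q) ↔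
      ∃ ρ : List Q, RunFrom Δ p u ρ ∧
        (p :: ρ).getLast (List.cons_ne_nil _ _) = q ∧
        (p :: ρ)[i - 1]? = some r ∧ u[i - 1]? = some a ∧ (p :: ρ)[i]? = some s := by
  obtain ⟨j, rfl⟩ : ∃ j, i = j + 1 := ⟨i - 1, by omega⟩
  rw [Nat.add_sub_cancel]
  by_cases ha : u[j]? = some a
  · obtain ⟨hj, hua⟩ := List.getElem?_eq_some_iff.mp ha
    have hu : u.take j ++ a :: u.drop (j + 1) = u := by
      rw [← hua, ← List.drop_eq_getElem_cons hj, List.take_append_drop]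
    have hlen : (u.take j).length = j := List.length_take_of_le hj.le
    have key := exists_run_through_iff Δ p q r s a (u.take j) (u.drop (j + 1))
    rw [hu, hlen] at key
    simp only [ha, key, hδ, true_and]
  · simp [ha]

/-- For a weighted automaton unambiguous from `p` to `q` and a transition
`δ = (r,a,s)`, position `i` of `u` satisfies `φ_δ` (prefix runs `p → r`, letter `a` at
`i`, suffix runs `s → q`) iff `u` labels a run from `p` to `q` whose `i`-th transition
is `δ`. -/
theorem phi_delta_characterization (Δ : Q → A → Q → Prop) (wgt : Q → A → Q → R)
    (p q r s : Q) (a : A) (hδ : Δ r a s) (hunamb : UnambFromTo Δ p q)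
    (u : List A) (i : ℕ) (hi1 : 1 ≤ i) (hi2 : i ≤ u.length) :
    (HasRun Δ p (u.take (i - 1)) r ∧ u[i - 1]? = some a ∧ HasRun Δ s (u.drop i) q) ↔
      ∃ ρ : List Q, RunFrom Δ p u ρ ∧
        (p :: ρ).getLast (List.cons_ne_nil _ _) = q ∧
        (p :: ρ)[i - 1]? = some r ∧ u[i - 1]? = some a ∧ (p :: ρ)[i]? = some s :=
  phi_delta_characterization_general Δ p q r s a hδ u i hi1
end

section
/- Let A be a weighted automaton over an alphabet Σ_{𝒱∪{y}} (words carry an extra {0,1}-component marking the value of a variable y). Construct A' over Σ_𝒱 with state set Q × {0,1}, initial states I × {0}, final states F × {1}, where transitions reading (ā,0) are duplicated on both levels and transitions reading (ā,1) go from level 0 to level 1, keeping weights. Then for every word w̄ over Σ_𝒱, the multiset of weight sequences of accepting runs of A' on w̄ equals the multiset union over all positions i of the multisets of weight sequences of accepting runs of A on (w̄, y ↦ i). -/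
variable {Q Q' A R : Type*}

/-- Transition relation of the projection construction `A'` over `Σ_𝒱`, with states
`Q × Bool`: level-preserving transitions simulate letters with `y`-bit `0`, and
transitions from level `false` to level `true` simulate letters with `y`-bit `1`. -/
def projTrans (Δ : Q → (A × Bool) → Q → Prop) :
    (Q × Bool) → A → (Q × Bool) → Prop :=
  fun p a q =>
    (p.2 = q.2 ∧ Δ p.1 (a, false) q.1) ∨ (p.2 = false ∧ q.2 = true ∧ Δ p.1 (a, true) q.1)

/-- Weight function of the projection construction. -/
def projWgt (wgt : Q → (A × Bool) → Q → R) :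
    (Q × Bool) → A → (Q × Bool) → R :=
  fun p a q => if p.2 = q.2 then wgt p.1 (a, false) q.1 else wgt p.1 (a, true) q.1

/-- `(w̄, y ↦ i)`: the word over `Σ_𝒱 × Bool` whose projection is `w̄` and whose
`Bool`-component is `true` exactly at (0-indexed) position `i`. -/
def markWord (w : List A) (i : ℕ) : List (A × Bool) :=
  w.zipIdx.map fun ja => (ja.1, ja.2 == i)

/-- Accepting runs on `w` whose weight sequence is `s`. -/
def AccRunsW (Δ : Q → A → Q → Prop) (wgt : Q → A → Q → R) (I F : Set Q)
    (w : List A) (s : List R) : Set (Q × List Q) :=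
  {x | x ∈ AccRuns Δ I F w ∧ wgtSeq wgt x.1 w x.2 = s}

/-!
A run of `A'` from level `false` to level `true` changes level exactly once, say at position `i`;
forgetting the levels turns it into a run of `A` on `(w̄, y ↦ i)` with the same weights, and
conversely every run of `A` on `(w̄, y ↦ i)` lifts to exactly one such run of `A'`. Hence the
accepting runs of `A'` with weight sequence `s` are the disjoint union over `i` of copies of
those of `A` on `(w̄, y ↦ i)`.
-/

theorem RunFrom.length_eq_s10 {Δ : Q → A → Q → Prop} {p : Q} {w : List A} {ρ : List Q}
    (h : RunFrom Δ p w ρ) : ρ.length = w.length := by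
  induction w generalizing p ρ with
  | nil => cases ρ <;> simp_all [RunFrom]
  | cons a w ih =>
    cases ρ with
    | nil => exact h.elim
    | cons q ρ => simpa using ih h.2

theorem finite_accRunsW [Finite Q] (Δ : Q → A → Q → Prop) (wgt : Q → A → Q → R) (I F : Set Q)
    (w : List A) (s : List R) : (AccRunsW Δ wgt I F w s).Finite :=
  (Set.finite_univ.prod (List.finite_length_eq Q w.length)).subset
    fun _ hx => ⟨trivial, hx.1.2.1.length_eq_s10⟩

@[simp]
theorem markWord_nil (i : ℕ) : markWord ([] : List A) i = [] := rfl

@[simp]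
theorem length_markWord (w : List A) (i : ℕ) : (markWord w i).length = w.length := by
  simp [markWord]

theorem markWord_cons_zero (a : A) (w : List A) :
    markWord (a :: w) 0 = (a, true) :: w.map (·, false) := by
  simp only [markWord, List.zipIdx_cons, List.zipIdx_succ, List.map_cons, List.map_map]
  conv_rhs => rw [← List.zipIdx_map_fst 0 w, List.map_map]
  simp [Function.comp_def]

theorem markWord_cons_succ (a : A) (w : List A) (i : ℕ) :
    markWord (a :: w) (i + 1) = (a, false) :: markWord w i := by
  simp [markWord, List.zipIdx_succ, Function.comp_def]

/-- Tags the states of a run of `A` with the level of `A'`, which switches to `true` at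
position `i`. -/
def tagLevel : ℕ → List Q → List (Q × Bool)
  | 0, ρ => ρ.map (·, true)
  | _ + 1, [] => []
  | i + 1, q :: ρ => (q, false) :: tagLevel i ρ

@[simp]
theorem map_fst_tagLevel (i : ℕ) (ρ : List Q) : (tagLevel i ρ).map Prod.fst = ρ := by
  induction ρ generalizing i with
  | nil => cases i <;> rfl
  | cons q ρ ih => cases i <;> simp [tagLevel, ih, Function.comp_def]

theorem findIdx_tagLevel {i : ℕ} {ρ : List Q} (hi : i < ρ.length) :
    (tagLevel i ρ).findIdx Prod.snd = i := by
  induction ρ generalizing i with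
  | nil => simp at hi
  | cons q ρ ih =>
    cases i with
    | zero => simp [tagLevel, List.findIdx_cons]
    | succ i => simp [tagLevel, List.findIdx_cons, ih (Nat.lt_of_succ_lt_succ hi)]

theorem getLast_cons_tagLevel (q : Q) (i : ℕ) (ρ : List Q) :
    ((q, false) :: tagLevel i ρ).getLast (List.cons_ne_nil _ _) =
      ((q :: ρ).getLast (List.cons_ne_nil _ _), decide (i < ρ.length)) := by
  induction ρ generalizing q i with
  | nil => cases i <;> rfl
  | cons p ρ ih =>
    cases i with
    | zero =>
      rw [tagLevel, List.getLast_cons (by simp), List.getLast_map]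
      simp
    | succ i => simpa [tagLevel, List.getLast_cons_cons] using ih p i

def liftRun (i : ℕ) (x : Q × List Q) : (Q × Bool) × List (Q × Bool) :=
  ((x.1, false), tagLevel i x.2)

theorem liftRun_injective (i : ℕ) : Function.Injective (liftRun (Q := Q) i) := by
  rintro ⟨q, ρ⟩ ⟨q', ρ'⟩ h
  simp only [liftRun, Prod.mk.injEq] at h
  simpa [h.1.1] using congrArg (List.map Prod.fst) h.2

theorem disjoint_image_liftRun {i j : ℕ} (hij : i ≠ j) {S T : Set (Q × List Q)}
    (hS : ∀ x ∈ S, i < x.2.length) (hT : ∀ x ∈ T, j < x.2.length) :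
    Disjoint (liftRun i '' S) (liftRun j '' T) := by
  rw [Set.disjoint_left]
  rintro _ ⟨x, hx, rfl⟩ ⟨y, hy, hyx⟩
  have hlevels := congrArg (fun z => z.2.findIdx Prod.snd) hyx
  simp only [liftRun, findIdx_tagLevel (hS x hx), findIdx_tagLevel (hT y hy)] at hlevels
  exact hij hlevels.symm

section Projection

variable (Δ : Q → (A × Bool) → Q → Prop) (wgt : Q → (A × Bool) → Q → R)

theorem runFrom_projTrans_true_iff (q : Q) (w : List A) (ρ : List Q) :
    RunFrom (projTrans Δ) (q, true) w (ρ.map (·, true)) ↔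
      RunFrom Δ q (w.map (·, false)) ρ := by
  induction w generalizing q ρ with
  | nil => cases ρ <;> simp [RunFrom]
  | cons a w ih =>
    cases ρ with
    | nil => simp [RunFrom]
    | cons p ρ => simp [RunFrom, projTrans, ih]

theorem runFrom_projTrans_tagLevel_iff (q : Q) (w : List A) (i : ℕ) (ρ : List Q) :
    RunFrom (projTrans Δ) (q, false) w (tagLevel i ρ) ↔ RunFrom Δ q (markWord w i) ρ := by
  induction w generalizing q i ρ with
  | nil => cases i <;> cases ρ <;> simp [RunFrom, tagLevel]
  | cons a w ih =>
    cases ρ with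
    | nil => cases i <;> simp [RunFrom, tagLevel, markWord_cons_zero, markWord_cons_succ]
    | cons p ρ =>
      cases i <;> simp [RunFrom, projTrans, tagLevel, markWord_cons_zero, markWord_cons_succ,
        ih, runFrom_projTrans_true_iff]

theorem exists_eq_map_of_runFrom_projTrans_true {q : Q} {w : List A} {L : List (Q × Bool)}
    (h : RunFrom (projTrans Δ) (q, true) w L) : ∃ ρ : List Q, L = ρ.map (·, true) := by
  induction w generalizing q L with
  | nil => cases L <;> simp_all [RunFrom]
  | cons a w ih =>
    obtain _ | ⟨⟨p, b⟩, L⟩ := L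
    · exact h.elim
    obtain ⟨hstep, hrun⟩ := h
    obtain ⟨rfl, -⟩ : b = true ∧ Δ q (a, false) p := by simpa [projTrans] using hstep
    obtain ⟨ρ, rfl⟩ := ih hrun
    exact ⟨p :: ρ, rfl⟩

theorem exists_eq_tagLevel_of_runFrom_projTrans_false {q : Q} {w : List A}
    {L : List (Q × Bool)} (h : RunFrom (projTrans Δ) (q, false) w L) :
    ∃ i ρ, L = tagLevel i ρ := by
  induction w generalizing q L with
  | nil =>
    cases L
    exacts [⟨0, [], rfl⟩, h.elim]
  | cons a w ih =>
    obtain _ | ⟨⟨p, b⟩, L⟩ := L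
    · exact h.elim
    cases b
    · obtain ⟨i, ρ, rfl⟩ := ih h.2
      exact ⟨i + 1, p :: ρ, rfl⟩
    · obtain ⟨ρ, rfl⟩ := exists_eq_map_of_runFrom_projTrans_true Δ h.2
      exact ⟨0, p :: ρ, rfl⟩

theorem wgtSeq_projWgt_true (q : Q) (w : List A) (ρ : List Q) :
    wgtSeq (projWgt wgt) (q, true) w (ρ.map (·, true)) =
      wgtSeq wgt q (w.map (·, false)) ρ := by
  induction w generalizing q ρ with
  | nil => rfl
  | cons a w ih =>
    cases ρ with
    | nil => rfl
    | cons p ρ => simp [wgtSeq, projWgt, ih]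

theorem wgtSeq_projWgt_tagLevel (q : Q) (w : List A) (i : ℕ) (ρ : List Q) :
    wgtSeq (projWgt wgt) (q, false) w (tagLevel i ρ) = wgtSeq wgt q (markWord w i) ρ := by
  induction w generalizing q i ρ with
  | nil => cases i <;> cases ρ <;> rfl
  | cons a w ih =>
    cases ρ with
    | nil => cases i <;> rfl
    | cons p ρ =>
      cases i <;> simp [wgtSeq, projWgt, tagLevel, markWord_cons_zero, markWord_cons_succ, ih,
        wgtSeq_projWgt_true]

variable {Δ wgt} {I F : Set Q} {w : List A} {s : List R}

theorem liftRun_mem_accRunsW_iff {i : ℕ} {x : Q × List Q} :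
    liftRun i x ∈ AccRunsW (projTrans Δ) (projWgt wgt) (I ×ˢ {false}) (F ×ˢ {true}) w s ↔
      i < w.length ∧ x ∈ AccRunsW Δ wgt I F (markWord w i) s := by
  obtain ⟨q, ρ⟩ := x
  simp only [liftRun, AccRunsW, AccRuns, Set.mem_ofPred_eq, Set.mem_prod, Set.mem_singleton_iff,
    and_true, runFrom_projTrans_tagLevel_iff, getLast_cons_tagLevel, decide_eq_true_eq,
    wgtSeq_projWgt_tagLevel]
  constructor
  · rintro ⟨⟨hq, hrun, hF, hi⟩, hs⟩
    exact ⟨by simpa [hrun.length_eq_s10] using hi, ⟨hq, hrun, hF⟩, hs⟩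
  · rintro ⟨hi, ⟨hq, hrun, hF⟩, hs⟩
    exact ⟨⟨hq, hrun, hF, by simpa [hrun.length_eq_s10] using hi⟩, hs⟩

theorem accRunsW_projTrans_eq_biUnion :
    AccRunsW (projTrans Δ) (projWgt wgt) (I ×ˢ {false}) (F ×ˢ {true}) w s =
      ⋃ i ∈ Finset.range w.length, liftRun i '' AccRunsW Δ wgt I F (markWord w i) s := by
  ext y
  simp only [Set.mem_iUnion, Set.mem_image, Finset.mem_range, exists_prop]
  constructor
  · intro hy
    obtain ⟨⟨q, b⟩, L⟩ := y
    obtain rfl : b = false := hy.1.1.2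
    obtain ⟨i, ρ, rfl⟩ := exists_eq_tagLevel_of_runFrom_projTrans_false Δ hy.1.2.1
    obtain ⟨hi, hx⟩ := (liftRun_mem_accRunsW_iff (i := i) (x := (q, ρ))).1 hy
    exact ⟨i, hi, (q, ρ), hx, rfl⟩
  · rintro ⟨i, hi, x, hx, rfl⟩
    exact liftRun_mem_accRunsW_iff.2 ⟨hi, hx⟩

end Projection

theorem proj_semantics_general [Fintype Q] (Δ : Q → (A × Bool) → Q → Prop)
    (wgt : Q → (A × Bool) → Q → R) (I F : Set Q)
    (w : List A) (s : List R) :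
    (AccRunsW (projTrans Δ) (projWgt wgt)
        (I ×ˢ ({false} : Set Bool)) (F ×ˢ ({true} : Set Bool)) w s).ncard
      = ∑ i ∈ Finset.range w.length, (AccRunsW Δ wgt I F (markWord w i) s).ncard := by
  have hlen : ∀ i ∈ (Finset.range w.length : Set ℕ), ∀ x ∈ AccRunsW Δ wgt I F (markWord w i) s,
      i < x.2.length := fun i hi x hx => by
    simpa [hx.1.2.1.length_eq_s10] using hi
  rw [accRunsW_projTrans_eq_biUnion, ← Finset.set_biUnion_coe,
    (Finset.range w.length).finite_toSet.ncard_biUnion (fun i _ => (finite_accRunsW ..).image _)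
      (fun i hi j hj hij => disjoint_image_liftRun hij (hlen i hi) (hlen j hj)),
    finsum_mem_coe_finset]
  exact Finset.sum_congr rfl fun i _ => Set.ncard_image_of_injective _ (liftRun_injective i)

/-- The multiset of weight sequences of accepting runs of `A'` on `w̄` equals the
multiset union over all positions `i` of the multisets of weight sequences of accepting
runs of `A` on `(w̄, y ↦ i)` (expressed by counting, for every weight sequence, the
accepting runs realizing it). -/
theorem proj_semantics [Fintype Q] (Δ : Q → (A × Bool) → Q → Prop)
    (wgt : Q → (A × Bool) → Q → R) (I F : Set Q)
    (w : List A) (hw : w ≠ []) (s : List R) :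
    (AccRunsW (projTrans Δ) (projWgt wgt)
        (I ×ˢ ({false} : Set Bool)) (F ×ˢ ({true} : Set Bool)) w s).ncard
      = ∑ i ∈ Finset.range w.length, (AccRunsW Δ wgt I F (markWord w i) s).ncard :=
  proj_semantics_general Δ wgt I F w s
end
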